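/- arXiv:2103.10092 — 2 statements merged into one kernel-verified Lean document; each statement's English description precedes it below -/
import Mathlib

section
/- Let W₀ ⊂ ℝ² be a bounded open set, U an open set with closure(W₀) ⊂ U, α₀ > 0, and let ψ : U → ℝ be three times continuously differentiable with ψ(x) ≥ 0 and |∇ψ(x)| ≥ α₀ for all x ∈ closure(W₀). For β > 0 set φ_β := e^{βψ}. Then there exists β₀ > 0, depending only on ψ and α₀, such that for all β ≥ β₀ and all x ∈ closure(W₀): |∇φ_β(x)| ≥ β₀ α₀ and Δφ_β(x) ≥ 0, where Δ denotes the Laplacian on ℝ². -/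
noncomputable section

open scoped RealInnerProductSpace

/-- Euclidean plane `ℝ²`. -/
abbrev E2 : Type := EuclideanSpace ℝ (Fin 2)

/-- The `j`-th standard basis vector of `ℝ²`. -/
def b2 (j : Fin 2) : E2 := EuclideanSpace.single j 1

/-- The Laplacian `Δf = ∑ⱼ ∂ⱼ²f` of a real valued function on `ℝ²`. -/
def lap2 (f : E2 → ℝ) (x : E2) : ℝ :=
  ∑ j, fderiv ℝ (fun y => fderiv ℝ f y (b2 j)) x (b2 j)

/-- The weight `φ_β = e^{βψ}`. -/
def phiB (ψ : E2 → ℝ) (β : ℝ) : E2 → ℝ := fun y => Real.exp (β * ψ y)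


/-! By the chain rule, `∇φ_β = β φ_β ∇ψ` and `Δφ_β = β φ_β (β |∇ψ|² + Δψ)`. Since `ψ ≥ 0` we have
`φ_β ≥ 1`, and `Δψ` is bounded below by some `-M` on the compact set `closure W₀`, so
`β₀ = max 1 (M / α₀²)` works. -/

lemma fderiv_apply_b2 (f : E2 → ℝ) (x : E2) (j : Fin 2) :
    fderiv ℝ f x (b2 j) = gradient f x j := by
  rw [← inner_gradient_left, b2, EuclideanSpace.inner_single_right]
  simp

lemma sum_sq_fderiv_apply_b2 (f : E2 → ℝ) (x : E2) :
    ∑ j, fderiv ℝ f x (b2 j) ^ 2 = ‖gradient f x‖ ^ 2 := by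
  simp only [fderiv_apply_b2, EuclideanSpace.real_norm_sq_eq]

lemma gradient_comp {F : Type*} [NormedAddCommGroup F] [InnerProductSpace ℝ F] [CompleteSpace F]
    {g : ℝ → ℝ} {g' : ℝ} {f : F → ℝ} {x : F}
    (hg : HasDerivAt g g' (f x)) (hf : DifferentiableAt ℝ f x) :
    gradient (g ∘ f) x = g' • gradient f x := by
  rw [(hg.comp_hasFDerivAt x hf.hasFDerivAt).hasGradientAt.gradient, map_smul]
  simp [gradient]

lemma fderiv_comp_apply_eventuallyEq {F : Type*} [NormedAddCommGroup F] [NormedSpace ℝ F]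
    {g g' : ℝ → ℝ} {f : F → ℝ} {x : F}
    (hg : ∀ t, HasDerivAt g (g' t) t) (hf : ∀ᶠ y in nhds x, DifferentiableAt ℝ f y) (v : F) :
    (fun y => fderiv ℝ (g ∘ f) y v) =ᶠ[nhds x] fun y => g' (f y) * fderiv ℝ f y v := by
  filter_upwards [hf] with y hy
  rw [((hg (f y)).comp_hasFDerivAt y hy.hasFDerivAt).fderiv]
  rfl

lemma lap2_comp {g g' : ℝ → ℝ} {g'' : ℝ} {f : E2 → ℝ} {x : E2}
    (hg : ∀ t, HasDerivAt g (g' t) t) (hg' : HasDerivAt g' g'' (f x))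
    (hf : ContDiffAt ℝ 2 f x) :
    lap2 (g ∘ f) x = g'' * ‖gradient f x‖ ^ 2 + g' (f x) * lap2 f x := by
  have hf_near : ∀ᶠ y in nhds x, DifferentiableAt ℝ f y :=
    hf.eventually (by simp) |>.mono fun y hy => hy.differentiableAt (by norm_num)
  have hpartial (j : Fin 2) : DifferentiableAt ℝ (fun y => fderiv ℝ f y (b2 j)) x :=
    ((hf.fderiv_right (m := 1) (by norm_num)).clm_apply contDiffAt_const).differentiableAt
      (by norm_num)
  have hsecond (j : Fin 2) :
      fderiv ℝ (fun y => fderiv ℝ (g ∘ f) y (b2 j)) x (b2 j) =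
        g'' * fderiv ℝ f x (b2 j) ^ 2 +
          g' (f x) * fderiv ℝ (fun y => fderiv ℝ f y (b2 j)) x (b2 j) := by
    have hprod : HasFDerivAt (fun y => g' (f y) * fderiv ℝ f y (b2 j)) _ x :=
      (hg'.comp_hasFDerivAt x (hf.differentiableAt (by norm_num)).hasFDerivAt).fun_mul
        (hpartial j).hasFDerivAt
    rw [(fderiv_comp_apply_eventuallyEq hg hf_near (b2 j)).fderiv_eq, hprod.fderiv]
    simp only [add_apply, FunLike.coe_smul, Pi.smul_apply, Function.comp_apply, smul_eq_mul]
    ring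
  simp only [lap2, hsecond, Finset.sum_add_distrib, ← Finset.mul_sum,
    sum_sq_fderiv_apply_b2]

lemma continuousOn_lap2 {f : E2 → ℝ} {U : Set E2} (hU : IsOpen U) (hf : ContDiffOn ℝ 2 f U) :
    ContinuousOn (lap2 f) U := by
  refine continuousOn_finsetSum _ fun j _ => ?_
  have hpartial : ContDiffOn ℝ 1 (fun y => fderiv ℝ f y (b2 j)) U :=
    (hf.fderiv_of_isOpen hU (by norm_num)).clm_apply contDiffOn_const
  exact ((hpartial.fderiv_of_isOpen (m := 0) hU le_rfl).clm_apply contDiffOn_const).continuousOn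

lemma hasDerivAt_exp_const_mul (β t : ℝ) :
    HasDerivAt (fun s => Real.exp (β * s)) (β * Real.exp (β * t)) t := by
  simpa [mul_comm] using ((hasDerivAt_id t).const_mul β).exp

lemma gradient_phiB {ψ : E2 → ℝ} {x : E2} (β : ℝ) (hψ : DifferentiableAt ℝ ψ x) :
    gradient (phiB ψ β) x = (β * Real.exp (β * ψ x)) • gradient ψ x :=
  gradient_comp (hasDerivAt_exp_const_mul β (ψ x)) hψ

lemma lap2_phiB {ψ : E2 → ℝ} {x : E2} (β : ℝ) (hψ : ContDiffAt ℝ 2 ψ x) :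
    lap2 (phiB ψ β) x =
      β * Real.exp (β * ψ x) * (β * ‖gradient ψ x‖ ^ 2 + lap2 ψ x) := by
  have hg' : HasDerivAt (fun s => β * Real.exp (β * s)) (β * (β * Real.exp (β * ψ x))) (ψ x) :=
    (hasDerivAt_exp_const_mul β (ψ x)).const_mul β
  change lap2 ((fun s => Real.exp (β * s)) ∘ ψ) x = _
  rw [lap2_comp (hasDerivAt_exp_const_mul β) hg' hψ]
  ring

theorem stmt10_general (W₀ U : Set E2) (hW₀bd : Bornology.IsBounded W₀)
    (hU : IsOpen U) (hWU : closure W₀ ⊆ U) (α₀ : ℝ) (hα₀ : 0 < α₀)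
    (ψ : E2 → ℝ) (hψ : ContDiffOn ℝ 3 ψ U)
    (hψ0 : ∀ x ∈ closure W₀, 0 ≤ ψ x)
    (hψgrad : ∀ x ∈ closure W₀, α₀ ≤ ‖gradient ψ x‖) :
    ∃ β₀ : ℝ, 0 < β₀ ∧
      ∀ β : ℝ, β₀ ≤ β → ∀ x ∈ closure W₀,
        β₀ * α₀ ≤ ‖gradient (phiB ψ β) x‖ ∧ 0 ≤ lap2 (phiB ψ β) x := by
  have hψ2 : ContDiffOn ℝ 2 ψ U := hψ.of_le (by norm_num)
  obtain ⟨M, hM⟩ := hW₀bd.isCompact_closure.exists_bound_of_continuousOn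
    ((continuousOn_lap2 hU hψ2).mono hWU)
  refine ⟨max 1 (M / α₀ ^ 2), by positivity, fun β hβ x hx => ?_⟩
  have hβ1 : 1 ≤ β := (le_max_left _ _).trans hβ
  have hβM : M ≤ β * α₀ ^ 2 := (div_le_iff₀ (by positivity)).mp ((le_max_right _ _).trans hβ)
  have hψx : ContDiffAt ℝ 2 ψ x := hψ2.contDiffAt (hU.mem_nhds (hWU hx))
  have hexp : 1 ≤ Real.exp (β * ψ x) := Real.one_le_exp (mul_nonneg (by linarith) (hψ0 x hx))
  have hgrad := hψgrad x hx
  constructor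
  · rw [gradient_phiB β (hψx.differentiableAt (by norm_num)), norm_smul,
      Real.norm_of_nonneg (by positivity)]
    calc max 1 (M / α₀ ^ 2) * α₀ ≤ β * ‖gradient ψ x‖ := by gcongr
      _ ≤ β * Real.exp (β * ψ x) * ‖gradient ψ x‖ := by
          gcongr; exact le_mul_of_one_le_right (by linarith) hexp
  · have hlap : -M ≤ lap2 ψ x := neg_le_of_abs_le (hM x hx)
    rw [lap2_phiB β hψx]
    have hMgrad : M ≤ β * ‖gradient ψ x‖ ^ 2 := hβM.trans (by gcongr)
    have hfactor : 0 ≤ β * ‖gradient ψ x‖ ^ 2 + lap2 ψ x := by linarith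
    positivity

/-- For `ψ : U → ℝ` of class `C³` with `ψ ≥ 0` and `|∇ψ| ≥ α₀ > 0` on
`closure W₀`, there is `β₀ > 0`, depending only on `ψ` and `α₀`, such that for all `β ≥ β₀`
and `x ∈ closure W₀` one has `|∇φ_β(x)| ≥ β₀ α₀` and `Δφ_β(x) ≥ 0`, where `φ_β = e^{βψ}`. -/
theorem stmt10 (W₀ U : Set E2) (hW₀ : IsOpen W₀) (hW₀bd : Bornology.IsBounded W₀)
    (hU : IsOpen U) (hWU : closure W₀ ⊆ U) (α₀ : ℝ) (hα₀ : 0 < α₀)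
    (ψ : E2 → ℝ) (hψ : ContDiffOn ℝ 3 ψ U)
    (hψ0 : ∀ x ∈ closure W₀, 0 ≤ ψ x)
    (hψgrad : ∀ x ∈ closure W₀, α₀ ≤ ‖gradient ψ x‖) :
    ∃ β₀ : ℝ, 0 < β₀ ∧
      ∀ β : ℝ, β₀ ≤ β → ∀ x ∈ closure W₀,
        β₀ * α₀ ≤ ‖gradient (phiB ψ β) x‖ ∧ 0 ≤ lap2 (phiB ψ β) x :=
  stmt10_general W₀ U hW₀bd hU hWU α₀ hα₀ ψ hψ hψ0 hψgrad
end
end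

section
/- Let W₀ ⊂ ℝ² be a bounded open set, U an open set with closure(W₀) ⊂ U, α₀ > 0, and let ψ : U → ℝ be three times continuously differentiable with ψ(x) ≥ 0 and |∇ψ(x)| ≥ α₀ for all x ∈ closure(W₀). For β > 0 set φ_β := e^{βψ}. Then there exist constants β₀, C₀, C₁, C₂ > 0, depending only on ψ and α₀, such that for all β ≥ β₀ and all x ∈ closure(W₀): (i) ∇(|∇φ_β|²)(x) · ∇φ_β(x) ≥ C₀ β |∇φ_β(x)|³; (ii) ⟨H(φ_β)(x) ξ, ξ⟩ + C₁ β |∇φ_β(x)| |ξ|² ≥ 0 for every ξ ∈ ℝ², where H(φ_β) denotes the Hessian matrix of φ_β; and (iii) the function |∇φ_β| is twice continuously differentiable on a neighborhood of closure(W₀) and |Δ(|∇φ_β|)(x)| ≤ C₂ |∇φ_β(x)|³. -/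
noncomputable section

open scoped RealInnerProductSpace

/-!
Since `∇φ_β = β φ_β ∇ψ`, each quantity in the statement is `φ_β` (to some power) times a
polynomial in `β` whose coefficients are derivatives of `ψ` of order at most three; these are
continuous near the compact set `closure W₀`, hence bounded on it. In (i) the leading term
`2β⁴φ_β³|∇ψ|⁴` dominates as soon as `βα₀⁴` exceeds the bound on `∇(|∇ψ|²)·∇ψ`. In (ii) the term
`β²φ_β (∂_ξψ)²` is nonnegative and `βφ_β D²ψ(ξ,ξ)` is absorbed by `β|∇φ_β||ξ|² ≥ α₀β²φ_β|ξ|²`.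
In (iii), `|∇φ_β| = βφ_β|∇ψ|` is `C²` where `∇ψ ≠ 0`, and its second derivatives are
`O(β³φ_β) ⊆ O(β³φ_β³|∇ψ|³)` because `φ_β ≥ 1` and `|∇ψ| ≥ α₀`.
-/

open scoped Topology
open Real (exp)

lemma IsCompact.exists_pos_bound_of_continuousOn {X G : Type*} [TopologicalSpace X]
    [SeminormedAddCommGroup G] {s : Set X} (hs : IsCompact s) {f : X → G}
    (hf : ContinuousOn f s) : ∃ C > 0, ∀ x ∈ s, ‖f x‖ ≤ C := by
  obtain ⟨C, hC⟩ := hs.exists_bound_of_continuousOn hf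
  exact ⟨max C 1, by positivity, fun x hx => (hC x hx).trans (le_max_left _ _)⟩

lemma contDiffOn_gradient_of_isOpen {F : Type*} [NormedAddCommGroup F] [InnerProductSpace ℝ F]
    [CompleteSpace F] {ψ : F → ℝ} {s : Set F} {n : WithTop ℕ∞} (hs : IsOpen s)
    (hψ : ContDiffOn ℝ (n + 1) ψ s) : ContDiffOn ℝ n (gradient ψ) s :=
  (InnerProductSpace.toDual ℝ F).symm.contDiff.comp_contDiffOn (hψ.fderiv_of_isOpen hs le_rfl)

section SecondDirDeriv

variable {E : Type*} [NormedAddCommGroup E] [NormedSpace ℝ E]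

-- `lap2 f x` is definitionally `∑ j, secondDirDeriv f (b2 j) x`.
def secondDirDeriv (f : E → ℝ) (v x : E) : ℝ :=
  fderiv ℝ (fun y => fderiv ℝ f y v) x v

variable {f g ψ : E → ℝ} {x : E}

lemma secondDirDeriv_eq_fderiv_fderiv (h : DifferentiableAt ℝ (fderiv ℝ f) x) (v : E) :
    secondDirDeriv f v x = fderiv ℝ (fderiv ℝ f) x v v := by
  rw [secondDirDeriv, fderiv_clm_apply h (differentiableAt_const v)]
  simp

lemma abs_secondDirDeriv_le (h : DifferentiableAt ℝ (fderiv ℝ f) x) (v : E) :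
    |secondDirDeriv f v x| ≤ ‖fderiv ℝ (fderiv ℝ f) x‖ * ‖v‖ ^ 2 := by
  rw [secondDirDeriv_eq_fderiv_fderiv h, ← Real.norm_eq_abs, sq, ← mul_assoc]
  exact ((fderiv ℝ (fderiv ℝ f) x v).le_opNorm v).trans
    (mul_le_mul_of_nonneg_right ((fderiv ℝ (fderiv ℝ f) x).le_opNorm v) (norm_nonneg v))

lemma Filter.EventuallyEq.secondDirDeriv_eq (h : f =ᶠ[𝓝 x] g) (v : E) :
    secondDirDeriv f v x = secondDirDeriv g v x := by
  unfold secondDirDeriv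
  rw [Filter.EventuallyEq.fderiv_eq (h.fderiv.mono fun y hy => by rw [hy])]

lemma secondDirDeriv_const_mul (c : ℝ) (f : E → ℝ) (v x : E) :
    secondDirDeriv (fun y => c * f y) v x = c * secondDirDeriv f v x := by
  have hDf : (fun y => fderiv ℝ (fun z => c * f z) y v) = c • fun y => fderiv ℝ f y v := by
    ext y
    exact congrArg (fun L => L y v) (fderiv_const_smul_field (𝕜 := ℝ) (f := f) c)
  simp [secondDirDeriv, hDf, fderiv_const_smul_field]

lemma secondDirDeriv_mul (hf : ContDiffAt ℝ 2 f x) (hg : ContDiffAt ℝ 2 g x) (v : E) :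
    secondDirDeriv (fun y => f y * g y) v x =
      secondDirDeriv f v x * g x + 2 * (fderiv ℝ f x v * fderiv ℝ g x v)
        + f x * secondDirDeriv g v x := by
  have hD : (fun y => fderiv ℝ (fun z => f z * g z) y v)
      =ᶠ[𝓝 x] fun y => f y * fderiv ℝ g y v + g y * fderiv ℝ f y v := by
    filter_upwards [hf.eventually (by simp), hg.eventually (by simp)] with y hfy hgy
    rw [fderiv_fun_mul (hfy.differentiableAt two_ne_zero) (hgy.differentiableAt two_ne_zero)]
    simp
  have hf' : DifferentiableAt ℝ (fun y => fderiv ℝ f y v) x :=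
    ((hf.fderiv_right le_rfl).clm_apply contDiffAt_const).differentiableAt one_ne_zero
  have hg' : DifferentiableAt ℝ (fun y => fderiv ℝ g y v) x :=
    ((hg.fderiv_right le_rfl).clm_apply contDiffAt_const).differentiableAt one_ne_zero
  have hf1 := hf.differentiableAt two_ne_zero
  have hg1 := hg.differentiableAt two_ne_zero
  rw [secondDirDeriv, hD.fderiv_eq, fderiv_fun_add (hf1.fun_mul hg') (hg1.fun_mul hf'),
    fderiv_fun_mul hf1 hg', fderiv_fun_mul hg1 hf']
  simp only [secondDirDeriv, add_apply, FunLike.coe_smul, Pi.smul_apply, smul_eq_mul]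
  ring

lemma hasFDerivAt_exp_mul (β : ℝ) (h : DifferentiableAt ℝ ψ x) :
    HasFDerivAt (fun y => exp (β * ψ y)) ((β * exp (β * ψ x)) • fderiv ℝ ψ x) x := by
  have := (h.hasFDerivAt.const_mul β).exp
  rwa [smul_smul, mul_comm (exp (β * ψ x)) β] at this

lemma secondDirDeriv_exp_mul (hψ : ContDiffAt ℝ 2 ψ x) (β : ℝ) (v : E) :
    secondDirDeriv (fun y => exp (β * ψ y)) v x =
      β * exp (β * ψ x) * (β * fderiv ℝ ψ x v ^ 2 + secondDirDeriv ψ v x) := by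
  have hD : (fun y => fderiv ℝ (fun z => exp (β * ψ z)) y v)
      =ᶠ[𝓝 x] fun y => exp (β * ψ y) * (β * fderiv ℝ ψ y v) := by
    filter_upwards [hψ.eventually (by simp)] with y hy
    rw [(hasFDerivAt_exp_mul β (hy.differentiableAt two_ne_zero)).fderiv]
    simp only [FunLike.coe_smul, Pi.smul_apply, smul_eq_mul]
    ring
  have hψ1 := hψ.differentiableAt two_ne_zero
  have hψ' : DifferentiableAt ℝ (fun y => fderiv ℝ ψ y v) x :=
    ((hψ.fderiv_right le_rfl).clm_apply contDiffAt_const).differentiableAt one_ne_zero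
  rw [secondDirDeriv, hD.fderiv_eq,
    ((hasFDerivAt_exp_mul β hψ1).fun_mul (hψ'.hasFDerivAt.const_mul β)).fderiv]
  simp only [secondDirDeriv, add_apply, FunLike.coe_smul, Pi.smul_apply, smul_eq_mul]
  ring

def expMulSecondDerivBound (ψ g : E → ℝ) (x : E) : ℝ :=
  (‖fderiv ℝ ψ x‖ ^ 2 + ‖fderiv ℝ (fderiv ℝ ψ) x‖) * |g x|
    + 2 * ‖fderiv ℝ ψ x‖ * ‖fderiv ℝ g x‖ + ‖fderiv ℝ (fderiv ℝ g) x‖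

lemma continuousOn_expMulSecondDerivBound {s : Set E} (hs : IsOpen s)
    (hψ : ContDiffOn ℝ 2 ψ s) (hg : ContDiffOn ℝ 2 g s) :
    ContinuousOn (expMulSecondDerivBound ψ g) s := by
  have hDψ := hψ.continuousOn_fderiv_of_isOpen hs one_le_two
  have hDg := hg.continuousOn_fderiv_of_isOpen hs one_le_two
  have hD2ψ := (hψ.fderiv_of_isOpen hs le_rfl).continuousOn_fderiv_of_isOpen hs le_rfl
  have hD2g := (hg.fderiv_of_isOpen hs le_rfl).continuousOn_fderiv_of_isOpen hs le_rfl
  exact ((((hDψ.norm.pow 2).add hD2ψ.norm).mul hg.continuousOn.abs).add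
    ((continuousOn_const.mul hDψ.norm).mul hDg.norm)).add hD2g.norm

lemma abs_secondDirDeriv_exp_mul_mul_le (hψ : ContDiffAt ℝ 2 ψ x) (hg : ContDiffAt ℝ 2 g x)
    {β : ℝ} (hβ : 1 ≤ β) (v : E) :
    |secondDirDeriv (fun y => exp (β * ψ y) * g y) v x| ≤
      β ^ 2 * exp (β * ψ x) * expMulSecondDerivBound ψ g x * ‖v‖ ^ 2 := by
  have hψ1 := hψ.differentiableAt two_ne_zero
  have hψ2 := (hψ.fderiv_right le_rfl).differentiableAt one_ne_zero
  have hg2 := (hg.fderiv_right le_rfl).differentiableAt one_ne_zero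
  rw [secondDirDeriv_mul (contDiffAt_const.mul hψ).exp hg, secondDirDeriv_exp_mul hψ,
    (hasFDerivAt_exp_mul β hψ1).fderiv]
  simp only [FunLike.coe_smul, Pi.smul_apply, smul_eq_mul]
  set e := exp (β * ψ x)
  set a := fderiv ℝ ψ x v
  set s := secondDirDeriv ψ v x
  set b := fderiv ℝ g x v
  set t := secondDirDeriv g v x
  have he : 0 < e := Real.exp_pos _
  have hβ0 : 0 ≤ β := zero_le_one.trans hβ
  have ha : |a| ≤ ‖fderiv ℝ ψ x‖ * ‖v‖ := (fderiv ℝ ψ x).le_opNorm v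
  have hb : |b| ≤ ‖fderiv ℝ g x‖ * ‖v‖ := (fderiv ℝ g x).le_opNorm v
  have hs : |s| ≤ ‖fderiv ℝ (fderiv ℝ ψ) x‖ * ‖v‖ ^ 2 := abs_secondDirDeriv_le hψ2 v
  have ht : |t| ≤ ‖fderiv ℝ (fderiv ℝ g) x‖ * ‖v‖ ^ 2 := abs_secondDirDeriv_le hg2 v
  have hββ : β ≤ β ^ 2 := by nlinarith
  have h1β : 1 ≤ β ^ 2 := by nlinarith
  calc |β * e * (β * a ^ 2 + s) * g x + 2 * (β * e * a * b) + e * t|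
      ≤ β ^ 2 * e * |a| ^ 2 * |g x| + β * e * |s| * |g x| + 2 * β * e * |a| * |b|
          + 1 * e * |t| := by
        rw [show β * e * (β * a ^ 2 + s) * g x + 2 * (β * e * a * b) + e * t
          = β ^ 2 * e * a ^ 2 * g x + β * e * s * g x + 2 * β * e * a * b + e * t by ring]
        have := abs_add_three (β ^ 2 * e * a ^ 2 * g x + β * e * s * g x) (2 * β * e * a * b)
          (e * t)
        have := abs_add_le (β ^ 2 * e * a ^ 2 * g x) (β * e * s * g x)
        simp only [abs_mul, sq_abs, abs_two, abs_of_nonneg hβ0, abs_of_pos he, abs_pow] at *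
        nlinarith
    _ ≤ β ^ 2 * e * (‖fderiv ℝ ψ x‖ * ‖v‖) ^ 2 * |g x|
          + β ^ 2 * e * (‖fderiv ℝ (fderiv ℝ ψ) x‖ * ‖v‖ ^ 2) * |g x|
          + 2 * β ^ 2 * e * (‖fderiv ℝ ψ x‖ * ‖v‖) * (‖fderiv ℝ g x‖ * ‖v‖)
          + β ^ 2 * e * (‖fderiv ℝ (fderiv ℝ g) x‖ * ‖v‖ ^ 2) := by gcongr
    _ = β ^ 2 * e * expMulSecondDerivBound ψ g x * ‖v‖ ^ 2 := by
        unfold expMulSecondDerivBound; ring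

end SecondDirDeriv

section PhiB

variable {ψ : E2 → ℝ} {x : E2} {β α₀ : ℝ}

lemma hasGradientAt_phiB (β : ℝ) (h : DifferentiableAt ℝ ψ x) :
    HasGradientAt (phiB ψ β) ((β * exp (β * ψ x)) • gradient ψ x) x := by
  rw [hasGradientAt_iff_hasFDerivAt, map_smul, ← h.hasGradientAt.hasFDerivAt.fderiv]
  exact hasFDerivAt_exp_mul β h

lemma norm_gradient_phiB (hβ : 0 ≤ β) (h : DifferentiableAt ℝ ψ x) :
    ‖gradient (phiB ψ β) x‖ = β * exp (β * ψ x) * ‖gradient ψ x‖ := by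
  rw [(hasGradientAt_phiB β h).gradient, norm_smul, Real.norm_of_nonneg (by positivity)]

lemma contDiffAt_phiB (hψ : ContDiffAt ℝ 2 ψ x) (β : ℝ) : ContDiffAt ℝ 2 (phiB ψ β) x :=
  (contDiffAt_const.mul hψ).exp

lemma inner_gradient_norm_gradient_phiB_sq (hβ : 0 ≤ β) (hψ : ContDiffAt ℝ 2 ψ x) :
    ⟪gradient (fun y => ‖gradient (phiB ψ β) y‖ ^ 2) x, gradient (phiB ψ β) x⟫ =
      (β * exp (β * ψ x)) ^ 3 *
        (2 * β * ‖gradient ψ x‖ ^ 4 + fderiv ℝ (fun y => ‖gradient ψ y‖ ^ 2) x (gradient ψ x)) := by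
  have hψ1 := hψ.differentiableAt two_ne_zero
  have hq : DifferentiableAt ℝ (fun y => ‖gradient ψ y‖ ^ 2) x := by
    have : ContDiffAt ℝ 1 (gradient ψ) x :=
      (InnerProductSpace.toDual ℝ E2).symm.contDiff.contDiffAt.comp x (hψ.fderiv_right le_rfl)
    exact (this.differentiableAt one_ne_zero).norm_sq ℝ
  have hA := (hasFDerivAt_exp_mul β hψ1).const_mul β
  have hev : (fun y => ‖gradient (phiB ψ β) y‖ ^ 2) =ᶠ[𝓝 x]
      fun y => β * exp (β * ψ y) * (β * exp (β * ψ y)) * ‖gradient ψ y‖ ^ 2 := by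
    filter_upwards [hψ.eventually (by simp)] with y hy
    rw [norm_gradient_phiB hβ (hy.differentiableAt two_ne_zero)]
    ring
  rw [gradient, InnerProductSpace.toDual_symm_apply, hev.fderiv_eq,
    ((hA.fun_mul hA).fun_mul hq.hasFDerivAt).fderiv, (hasGradientAt_phiB β hψ1).gradient]
  simp only [add_apply, FunLike.coe_smul, Pi.smul_apply, map_smul, smul_eq_mul]
  rw [← InnerProductSpace.toDual_symm_apply (y := fderiv ℝ ψ x), ← gradient,
    real_inner_self_eq_norm_sq]
  ring

lemma le_inner_gradient_norm_gradient_phiB_sq (hα₀ : 0 < α₀) (hψ : ContDiffAt ℝ 2 ψ x)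
    (hαx : α₀ ≤ ‖gradient ψ x‖) (hβ : 0 ≤ β)
    (hr : -(β * α₀ ^ 4) ≤ fderiv ℝ (fun y => ‖gradient ψ y‖ ^ 2) x (gradient ψ x)) :
    α₀ * β * ‖gradient (phiB ψ β) x‖ ^ 3 ≤
      ⟪gradient (fun y => ‖gradient (phiB ψ β) y‖ ^ 2) x, gradient (phiB ψ β) x⟫ := by
  rw [inner_gradient_norm_gradient_phiB_sq hβ hψ,
    norm_gradient_phiB hβ (hψ.differentiableAt two_ne_zero)]
  set n := ‖gradient ψ x‖
  set r := fderiv ℝ (fun y => ‖gradient ψ y‖ ^ 2) x (gradient ψ x)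
  have key : α₀ * β * n ^ 3 ≤ 2 * β * n ^ 4 + r := by
    have h4 : α₀ ^ 4 ≤ n ^ 4 := pow_le_pow_left₀ hα₀.le hαx 4
    have h3 : α₀ * n ^ 3 ≤ n ^ 4 := by
      rw [pow_succ n 3, mul_comm]; exact mul_le_mul_of_nonneg_left hαx (by positivity)
    nlinarith [mul_le_mul_of_nonneg_left h4 hβ, mul_le_mul_of_nonneg_left h3 hβ]
  calc α₀ * β * (β * exp (β * ψ x) * n) ^ 3 = (β * exp (β * ψ x)) ^ 3 * (α₀ * β * n ^ 3) := by ring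
    _ ≤ _ := mul_le_mul_of_nonneg_left key (by positivity)

lemma iteratedFDeriv_two_phiB_apply (hψ : ContDiffAt ℝ 2 ψ x) (β : ℝ) (ξ : E2) :
    iteratedFDeriv ℝ 2 (phiB ψ β) x ![ξ, ξ] =
      β * exp (β * ψ x) * (β * fderiv ℝ ψ x ξ ^ 2 + secondDirDeriv ψ ξ x) := by
  simp only [iteratedFDeriv_two_apply, Matrix.cons_val_zero, Matrix.cons_val_one]
  rw [← secondDirDeriv_eq_fderiv_fderiv
      (((contDiffAt_phiB hψ β).fderiv_right le_rfl).differentiableAt one_ne_zero)]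
  exact secondDirDeriv_exp_mul hψ β ξ

lemma iteratedFDeriv_two_phiB_add_nonneg (hα₀ : 0 < α₀) (hψ : ContDiffAt ℝ 2 ψ x)
    (hαx : α₀ ≤ ‖gradient ψ x‖) {K : ℝ} (hK : ‖fderiv ℝ (fderiv ℝ ψ) x‖ ≤ K) (hβ : 1 ≤ β)
    (ξ : E2) :
    0 ≤ iteratedFDeriv ℝ 2 (phiB ψ β) x ![ξ, ξ] +
      K / α₀ * β * ‖gradient (phiB ψ β) x‖ * ‖ξ‖ ^ 2 := by
  have hβ0 : 0 ≤ β := zero_le_one.trans hβ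
  rw [iteratedFDeriv_two_phiB_apply hψ, norm_gradient_phiB hβ0 (hψ.differentiableAt two_ne_zero)]
  set e := exp (β * ψ x)
  have he : 0 < e := Real.exp_pos _
  have hK0 : 0 ≤ K := (norm_nonneg (fderiv ℝ (fderiv ℝ ψ) x)).trans hK
  have hs : -(K * ‖ξ‖ ^ 2) ≤ secondDirDeriv ψ ξ x :=
    neg_le_of_abs_le ((abs_secondDirDeriv_le
      ((hψ.fderiv_right le_rfl).differentiableAt one_ne_zero) ξ).trans
      (mul_le_mul_of_nonneg_right hK (by positivity)))
  have hKα : K ≤ K / α₀ * ‖gradient ψ x‖ := by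
    rw [div_mul_eq_mul_div, le_div_iff₀ hα₀]; exact mul_le_mul_of_nonneg_left hαx hK0
  have h1 : 0 ≤ β * e * (β * fderiv ℝ ψ x ξ ^ 2) := by positivity
  have h2 : β * e * (K * ‖ξ‖ ^ 2) ≤ K / α₀ * β * (β * e * ‖gradient ψ x‖) * ‖ξ‖ ^ 2 := by
    calc β * e * (K * ‖ξ‖ ^ 2) ≤ β * e * (β * (K / α₀ * ‖gradient ψ x‖) * ‖ξ‖ ^ 2) := by
          gcongr; nlinarith
      _ = _ := by ring
  nlinarith [mul_le_mul_of_nonneg_left hs (by positivity : 0 ≤ β * e)]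

lemma norm_gradient_phiB_eventuallyEq (hβ : 0 ≤ β) (hψ : ∀ᶠ y in 𝓝 x, DifferentiableAt ℝ ψ y) :
    (fun y => ‖gradient (phiB ψ β) y‖) =ᶠ[𝓝 x] fun y => β * (exp (β * ψ y) * ‖gradient ψ y‖) := by
  filter_upwards [hψ] with y hy
  rw [norm_gradient_phiB hβ hy, mul_assoc]

lemma contDiffOn_norm_gradient_phiB {V : Set E2} (hV : IsOpen V) (hψ : ContDiffOn ℝ 2 ψ V)
    (hn : ContDiffOn ℝ 2 (fun y => ‖gradient ψ y‖) V) (hβ : 0 ≤ β) :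
    ContDiffOn ℝ 2 (fun y => ‖gradient (phiB ψ β) y‖) V := by
  refine ContDiffOn.congr (f := fun y => β * (exp (β * ψ y) * ‖gradient ψ y‖))
    (contDiffOn_const.mul ((contDiffOn_const.mul hψ).exp.mul hn)) fun y hy => ?_
  exact norm_gradient_phiB hβ ((hψ.differentiableOn two_ne_zero y hy).differentiableAt
    (hV.mem_nhds hy)) |>.trans (mul_assoc _ _ _)

lemma abs_lap2_norm_gradient_phiB_le (hα₀ : 0 < α₀) (hψ : ContDiffAt ℝ 2 ψ x)
    (hn : ContDiffAt ℝ 2 (fun y => ‖gradient ψ y‖) x) (hψ0 : 0 ≤ ψ x)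
    (hαx : α₀ ≤ ‖gradient ψ x‖) {M : ℝ}
    (hM : expMulSecondDerivBound ψ (fun y => ‖gradient ψ y‖) x ≤ M) (hβ : 1 ≤ β) :
    |lap2 (fun y => ‖gradient (phiB ψ β) y‖) x| ≤ 2 * M / α₀ ^ 3 * ‖gradient (phiB ψ β) x‖ ^ 3 := by
  have hβ0 : 0 ≤ β := zero_le_one.trans hβ
  have hev := norm_gradient_phiB_eventuallyEq hβ0
    ((hψ.eventually (by simp)).mono fun y hy => hy.differentiableAt two_ne_zero)
  set e := exp (β * ψ x)
  have he : 1 ≤ e := Real.one_le_exp (mul_nonneg hβ0 hψ0)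
  have hM0 : 0 ≤ M := le_trans (by unfold expMulSecondDerivBound; positivity) hM
  have hterm : ∀ j,
      |secondDirDeriv (fun y => ‖gradient (phiB ψ β) y‖) (b2 j) x| ≤ β ^ 3 * e * M := by
    intro j
    rw [hev.secondDirDeriv_eq, secondDirDeriv_const_mul, abs_mul, abs_of_nonneg hβ0]
    have hb : ‖b2 j‖ = 1 := by simp [b2]
    calc β * |secondDirDeriv (fun y => exp (β * ψ y) * ‖gradient ψ y‖) (b2 j) x|
        ≤ β * (β ^ 2 * e * expMulSecondDerivBound ψ (fun y => ‖gradient ψ y‖) x * ‖b2 j‖ ^ 2) :=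
          mul_le_mul_of_nonneg_left (abs_secondDirDeriv_exp_mul_mul_le hψ hn hβ (b2 j)) hβ0
      _ = β ^ 3 * e * expMulSecondDerivBound ψ (fun y => ‖gradient ψ y‖) x := by rw [hb]; ring
      _ ≤ β ^ 3 * e * M := by gcongr
  have hlap : |lap2 (fun y => ‖gradient (phiB ψ β) y‖) x| ≤ 2 * (β ^ 3 * e * M) := by
    change |∑ j, secondDirDeriv _ (b2 j) x| ≤ _
    rw [Fin.sum_univ_two]
    linarith [abs_add_le (secondDirDeriv (fun y => ‖gradient (phiB ψ β) y‖) (b2 0) x)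
      (secondDirDeriv (fun y => ‖gradient (phiB ψ β) y‖) (b2 1) x), hterm 0, hterm 1]
  rw [norm_gradient_phiB hβ0 (hψ.differentiableAt two_ne_zero)]
  have he3 : e ≤ e ^ 3 := le_self_pow₀ he (by norm_num)
  have hα3 : α₀ ^ 3 ≤ ‖gradient ψ x‖ ^ 3 := pow_le_pow_left₀ hα₀.le hαx 3
  calc _ ≤ 2 * (β ^ 3 * e * M) := hlap
    _ ≤ 2 * M / α₀ ^ 3 * (β ^ 3 * e ^ 3 * α₀ ^ 3) := by
      rw [div_mul_eq_mul_div, le_div_iff₀ (by positivity)]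
      nlinarith [mul_le_mul_of_nonneg_left he3 (by positivity : 0 ≤ 2 * β ^ 3 * M * α₀ ^ 3)]
    _ ≤ 2 * M / α₀ ^ 3 * (β * e * ‖gradient ψ x‖) ^ 3 := by
      rw [mul_pow, mul_pow]; gcongr

end PhiB

theorem stmt11_general (W₀ U : Set E2) (hW₀bd : Bornology.IsBounded W₀)
    (hU : IsOpen U) (hWU : closure W₀ ⊆ U) (α₀ : ℝ) (hα₀ : 0 < α₀)
    (ψ : E2 → ℝ) (hψ : ContDiffOn ℝ 3 ψ U)
    (hψ0 : ∀ x ∈ closure W₀, 0 ≤ ψ x)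
    (hψgrad : ∀ x ∈ closure W₀, α₀ ≤ ‖gradient ψ x‖) :
    ∃ β₀ C₀ C₁ C₂ : ℝ, 0 < β₀ ∧ 0 < C₀ ∧ 0 < C₁ ∧ 0 < C₂ ∧
      ∀ β : ℝ, β₀ ≤ β →
        (∀ x ∈ closure W₀,
          C₀ * β * ‖gradient (phiB ψ β) x‖ ^ 3 ≤
            ⟪gradient (fun y => ‖gradient (phiB ψ β) y‖ ^ 2) x, gradient (phiB ψ β) x⟫) ∧
        (∀ x ∈ closure W₀, ∀ ξ : E2,
          0 ≤ iteratedFDeriv ℝ 2 (phiB ψ β) x ![ξ, ξ] +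
            C₁ * β * ‖gradient (phiB ψ β) x‖ * ‖ξ‖ ^ 2) ∧
        (∃ V : Set E2, IsOpen V ∧ closure W₀ ⊆ V ∧
          ContDiffOn ℝ 2 (fun y => ‖gradient (phiB ψ β) y‖) V ∧
          ∀ x ∈ closure W₀,
            |lap2 (fun y => ‖gradient (phiB ψ β) y‖) x| ≤
              C₂ * ‖gradient (phiB ψ β) x‖ ^ 3) := by
  have hcpt : IsCompact (closure W₀) := hW₀bd.isCompact_closure
  have hψ2 : ContDiffOn ℝ 2 ψ U := hψ.of_le (by norm_num)
  have hψx : ∀ x ∈ closure W₀, ContDiffAt ℝ 2 ψ x := fun x hx =>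
    (hψ2 x (hWU hx)).contDiffAt (hU.mem_nhds (hWU hx))
  have hgrad : ContDiffOn ℝ 2 (gradient ψ) U := contDiffOn_gradient_of_isOpen hU hψ
  set V := U ∩ gradient ψ ⁻¹' {0}ᶜ
  have hV : IsOpen V := hgrad.continuousOn.isOpen_inter_preimage hU isOpen_compl_singleton
  have hKV : closure W₀ ⊆ V := fun x hx =>
    ⟨hWU hx, norm_pos_iff.mp (hα₀.trans_le (hψgrad x hx))⟩
  have hn : ContDiffOn ℝ 2 (fun y => ‖gradient ψ y‖) V :=
    (hgrad.mono Set.inter_subset_left).norm ℝ fun y hy => hy.2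
  obtain ⟨M, -, hM⟩ := hcpt.exists_pos_bound_of_continuousOn
    ((((hgrad.norm_sq ℝ).continuousOn_fderiv_of_isOpen hU one_le_two).clm_apply
      hgrad.continuousOn).mono hWU)
  obtain ⟨K, hK0, hK⟩ := hcpt.exists_pos_bound_of_continuousOn
    (((hψ.fderiv_of_isOpen hU (m := 2) le_rfl).continuousOn_fderiv_of_isOpen hU
      one_le_two).mono hWU)
  obtain ⟨T, hT0, hT⟩ := hcpt.exists_pos_bound_of_continuousOn
    ((continuousOn_expMulSecondDerivBound hV (hψ2.mono Set.inter_subset_left) hn).mono hKV)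
  refine ⟨max 1 (M / α₀ ^ 4), α₀, K / α₀, 2 * T / α₀ ^ 3, by positivity, hα₀, by positivity,
    by positivity, fun β hβ => ?_⟩
  have hβ1 : 1 ≤ β := (le_max_left _ _).trans hβ
  refine ⟨fun x hx => ?_, fun x hx ξ => ?_, V, hV, hKV, ?_, fun x hx => ?_⟩
  · have hβM : M ≤ β * α₀ ^ 4 := by
      rw [← div_le_iff₀ (by positivity)]; exact (le_max_right _ _).trans hβ
    have hr := neg_le_of_abs_le ((Real.norm_eq_abs _).symm.trans_le (hM x hx))
    exact le_inner_gradient_norm_gradient_phiB_sq hα₀ (hψx x hx) (hψgrad x hx)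
      (by positivity) (by linarith)
  · exact iteratedFDeriv_two_phiB_add_nonneg hα₀ (hψx x hx) (hψgrad x hx) (hK x hx) hβ1 ξ
  · exact contDiffOn_norm_gradient_phiB hV (hψ2.mono Set.inter_subset_left) hn (by positivity)
  · exact abs_lap2_norm_gradient_phiB_le hα₀ (hψx x hx)
      ((hn x (hKV hx)).contDiffAt (hV.mem_nhds (hKV hx))) (hψ0 x hx) (hψgrad x hx)
      ((le_abs_self _).trans (hT x hx)) hβ1

/-- For `ψ : U → ℝ` of class `C³` with `ψ ≥ 0` and `|∇ψ| ≥ α₀ > 0` on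
`closure W₀`, there are `β₀, C₀, C₁, C₂ > 0`, depending only on `ψ` and `α₀`, such that for
all `β ≥ β₀` and all `x ∈ closure W₀` (with `φ_β = e^{βψ}`):
(i) `∇(|∇φ_β|²)·∇φ_β ≥ C₀ β |∇φ_β|³`;
(ii) `⟨H(φ_β)ξ, ξ⟩ + C₁ β |∇φ_β| |ξ|² ≥ 0` for all `ξ ∈ ℝ²`;
(iii) `|∇φ_β|` is `C²` on a neighborhood of `closure W₀` and `|Δ(|∇φ_β|)| ≤ C₂ |∇φ_β|³`. -/
theorem stmt11 (W₀ U : Set E2) (hW₀ : IsOpen W₀) (hW₀bd : Bornology.IsBounded W₀)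
    (hU : IsOpen U) (hWU : closure W₀ ⊆ U) (α₀ : ℝ) (hα₀ : 0 < α₀)
    (ψ : E2 → ℝ) (hψ : ContDiffOn ℝ 3 ψ U)
    (hψ0 : ∀ x ∈ closure W₀, 0 ≤ ψ x)
    (hψgrad : ∀ x ∈ closure W₀, α₀ ≤ ‖gradient ψ x‖) :
    ∃ β₀ C₀ C₁ C₂ : ℝ, 0 < β₀ ∧ 0 < C₀ ∧ 0 < C₁ ∧ 0 < C₂ ∧
      ∀ β : ℝ, β₀ ≤ β →
        (∀ x ∈ closure W₀,
          C₀ * β * ‖gradient (phiB ψ β) x‖ ^ 3 ≤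
            ⟪gradient (fun y => ‖gradient (phiB ψ β) y‖ ^ 2) x, gradient (phiB ψ β) x⟫) ∧
        (∀ x ∈ closure W₀, ∀ ξ : E2,
          0 ≤ iteratedFDeriv ℝ 2 (phiB ψ β) x ![ξ, ξ] +
            C₁ * β * ‖gradient (phiB ψ β) x‖ * ‖ξ‖ ^ 2) ∧
        (∃ V : Set E2, IsOpen V ∧ closure W₀ ⊆ V ∧
          ContDiffOn ℝ 2 (fun y => ‖gradient (phiB ψ β) y‖) V ∧
          ∀ x ∈ closure W₀,
            |lap2 (fun y => ‖gradient (phiB ψ β) y‖) x| ≤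
              C₂ * ‖gradient (phiB ψ β) x‖ ^ 3) :=
  stmt11_general W₀ U hW₀bd hU hWU α₀ hα₀ ψ hψ hψ0 hψgrad
end
end
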